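/- Let u, u' : ℕ → ℝ be two sequences that agree at every position except a single position p ≥ 1, and suppose position p lies in a strictly monotone ascending segment of both sequences: u(p−1) < min(u(p), u'(p)) and max(u(p), u'(p)) < u(p+1). Then for all real thresholds α > β and all n ≥ p+1, R_{α,β}[u](n) = R_{α,β}[u'](n); consequently, PAL_μ(u)(n) = PAL_μ(u')(n) for every finite weighted family μ and all n ≥ p+1. In particular no Preisach Attention Layer can compute the random-access retrieval function f_copy(u, p) = u(p), since that function distinguishes u from u'. -/

import Mathlib

/-!
A relay changes state only when its input leaves the open interval `(β, α)`, and otherwise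
keeps its previous state. On a rising segment `u (p - 1) < u p < u (p + 1)`, the state at
`p + 1` depends on the past only if `u (p + 1) < α`; then `u p < α` as well, so the state at `p`
either is inherited from `p - 1` or is forced to `0` by `u p ≤ β`, in which case
`u (p - 1) ≤ β` forced the state at `p - 1` to `0` already. Either way the state at `p` equals the
state at `p - 1`, for `u` and `u'` alike, so the value at position `p` is forgotten from time
`p + 1` on; a PAL is a linear combination of relays and forgets it too.
-/

open Set

noncomputable def relay (α β : ℝ) (u : ℕ → ℝ) : ℕ → ℝ
  | 0 => if u 0 ≥ α then 1 else 0
  | n + 1 => if u (n + 1) ≥ α then 1 else if u (n + 1) ≤ β then 0 else relay α β u n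

noncomputable def PAL (S : Finset (ℝ × ℝ)) (μ : ℝ × ℝ → ℝ) (u : ℕ → ℝ) (n : ℕ) : ℝ :=
  ∑ p ∈ S, μ p * relay p.1 p.2 u n

lemma relay_succ (α β : ℝ) (u : ℕ → ℝ) (n : ℕ) :
    relay α β u (n + 1) =
      if u (n + 1) ≥ α then 1 else if u (n + 1) ≤ β then 0 else relay α β u n := by
  rw [relay]

lemma relay_eq_zero {α β : ℝ} {u : ℕ → ℝ} {n : ℕ} (hβ : u n ≤ β) (hα : u n < α) :
    relay α β u n = 0 := by
  cases n with
  | zero => simp [relay, hα]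
  | succ n => simp [relay_succ, hα, hβ]

lemma relay_congr (α β : ℝ) {u u' : ℕ → ℝ} {m : ℕ} (h : ∀ j ≤ m, u j = u' j) :
    relay α β u m = relay α β u' m := by
  induction m with
  | zero => simp [relay, h 0 le_rfl]
  | succ n ih =>
    simp [relay_succ, h (n + 1) le_rfl, ih fun j hj => h j (Nat.le_succ_of_le hj)]

lemma relay_succ_congr {α β : ℝ} {u u' : ℕ → ℝ} {n : ℕ} (hu : u (n + 1) = u' (n + 1))
    (hprev : u (n + 1) ∈ Ioo β α → relay α β u n = relay α β u' n) :
    relay α β u (n + 1) = relay α β u' (n + 1) := by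
  rw [relay_succ, relay_succ, ← hu]
  by_cases hα : u (n + 1) ≥ α
  · simp only [if_pos hα]
  by_cases hβ : u (n + 1) ≤ β
  · simp only [if_neg hα, if_pos hβ]
  · simp only [if_neg hα, if_neg hβ]
    exact hprev ⟨not_le.mp hβ, not_le.mp hα⟩

lemma relay_succ_eq_of_lt {α β : ℝ} {u : ℕ → ℝ} {n : ℕ} (hrise : u n < u (n + 1))
    (hα : u (n + 1) < α) : relay α β u (n + 1) = relay α β u n := by
  by_cases hβ : u (n + 1) ≤ β
  · rw [relay_eq_zero hβ hα, relay_eq_zero (hrise.le.trans hβ) (hrise.trans hα)]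
  · simp [relay_succ, not_le.mpr hα, hβ]

lemma relay_eq_of_le {α β : ℝ} {u u' : ℕ → ℝ} {N : ℕ}
    (hN : relay α β u N = relay α β u' N) (h : ∀ j, N < j → u j = u' j) :
    ∀ n, N ≤ n → relay α β u n = relay α β u' n := by
  intro n hn
  induction n, hn using Nat.le_induction with
  | base => exact hN
  | succ n hn ih => exact relay_succ_congr (h (n + 1) (by omega)) fun _ => ih

lemma relay_add_two_congr (α β : ℝ) {u u' : ℕ → ℝ} {m : ℕ}
    (hagree : ∀ j, j ≠ m + 1 → u j = u' j)
    (hlo : u m < u (m + 1)) (hlo' : u m < u' (m + 1))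
    (hhi : u (m + 1) < u (m + 2)) (hhi' : u' (m + 1) < u (m + 2)) :
    relay α β u (m + 2) = relay α β u' (m + 2) := by
  have htop : u (m + 2) = u' (m + 2) := hagree (m + 2) (by omega)
  refine relay_succ_congr htop fun hmid => ?_
  have hlo'' : u' m < u' (m + 1) := hagree m (by omega) ▸ hlo'
  calc relay α β u (m + 1) = relay α β u m := relay_succ_eq_of_lt hlo (hhi.trans hmid.2)
    _ = relay α β u' m := relay_congr α β fun j hj => hagree j (by omega)
    _ = relay α β u' (m + 1) := (relay_succ_eq_of_lt hlo'' (hhi'.trans hmid.2)).symm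

lemma PAL_congr {S : Finset (ℝ × ℝ)} (μ : ℝ × ℝ → ℝ) {u u' : ℕ → ℝ} {n : ℕ}
    (h : ∀ q ∈ S, relay q.1 q.2 u n = relay q.1 q.2 u' n) :
    PAL S μ u n = PAL S μ u' n :=
  Finset.sum_congr rfl fun q hq => by rw [h q hq]

/-- Two sequences differing only at a position `p` lying in a strictly monotone
ascending segment of both have identical relay states (hence identical PAL outputs)
at all times `n ≥ p + 1`.  In particular no Preisach Attention Layer can compute the
random-access retrieval function `f_copy(u, p) = u p`, since that function
distinguishes `u` from `u'`. -/
theorem relay_PAL_no_random_access (u u' : ℕ → ℝ) (p : ℕ) (hp : 1 ≤ p)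
    (hagree : ∀ j, j ≠ p → u j = u' j)
    (hlo : u (p - 1) < min (u p) (u' p))
    (hhi : max (u p) (u' p) < u (p + 1)) :
    (∀ α β : ℝ, α > β → ∀ n, p + 1 ≤ n → relay α β u n = relay α β u' n) ∧
    (∀ (S : Finset (ℝ × ℝ)), (∀ q ∈ S, q.1 > q.2) → ∀ (μ : ℝ × ℝ → ℝ),
      ∀ n, p + 1 ≤ n → PAL S μ u n = PAL S μ u' n) ∧
    (u p ≠ u' p →
      ∀ (S : Finset (ℝ × ℝ)), (∀ q ∈ S, q.1 > q.2) → ∀ (μ : ℝ × ℝ → ℝ),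
        ∀ n, p + 1 ≤ n → ¬(PAL S μ u n = u p ∧ PAL S μ u' n = u' p)) := by
  obtain ⟨m, rfl⟩ : ∃ m, p = m + 1 := ⟨p - 1, by omega⟩
  rw [Nat.add_sub_cancel, lt_min_iff] at hlo
  rw [max_lt_iff] at hhi
  have hrelay : ∀ α β : ℝ, ∀ n, m + 2 ≤ n → relay α β u n = relay α β u' n := fun α β =>
    relay_eq_of_le (relay_add_two_congr α β hagree hlo.1 hlo.2 hhi.1 hhi.2)
      fun j hj => hagree j (by omega)
  have hPAL : ∀ (S : Finset (ℝ × ℝ)) (μ : ℝ × ℝ → ℝ) (n : ℕ), m + 2 ≤ n →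
      PAL S μ u n = PAL S μ u' n := fun S μ n hn =>
    PAL_congr μ fun q _ => hrelay q.1 q.2 n hn
  refine ⟨fun α β _ => hrelay α β, fun S _ μ => hPAL S μ, ?_⟩
  rintro hne S - μ n hn ⟨hu, hu'⟩
  exact hne (hu.symm.trans ((hPAL S μ n hn).trans hu'))
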